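/- Let (E_k) and (d_k) be nonnegative real sequences and c, c̄, θ > 0 constants such that E_{k+1} ≤ E_k + c(1+θ)^{−k} − c̄ d_k and E_{k+1} ≤ c(d_k + (1+θ)^{−k}) for all k ≥ 0. Then there exist constants C > 0 and τ ∈ (0,1) such that E_k ≤ C τ^k for all k ≥ 0. -/
import Mathlib


/-- If E_{k+1} ≤ E_k + c(1+θ)^{−k} − c̄ d_k and E_{k+1} ≤ c(d_k + (1+θ)^{−k}),
then E_k ≤ C τ^k for some C > 0 and τ ∈ (0,1). -/
theorem stmt16 (E d : ℕ → ℝ) (c cbar θ : ℝ) (hc : 0 < c) (hcbar : 0 < cbar)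
    (hθ : 0 < θ) (hE : ∀ k, 0 ≤ E k) (hd : ∀ k, 0 ≤ d k)
    (hrec1 : ∀ k, E (k + 1) ≤ E k + c / (1 + θ) ^ k - cbar * d k)
    (hrec2 : ∀ k, E (k + 1) ≤ c * (d k + 1 / (1 + θ) ^ k)) :
    ∃ C τ : ℝ, 0 < C ∧ 0 < τ ∧ τ < 1 ∧ ∀ k, E k ≤ C * τ ^ k := by
  have hccbar : 0 < c + cbar := by linarith
  set ρ : ℝ := c / (c + cbar) with hρ
  have hρ0 : 0 < ρ := div_pos hc hccbar
  have hρ1 : ρ < 1 := (div_lt_one hccbar).2 (by linarith)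
  have hθ1 : (1:ℝ) < 1 + θ := by linarith
  set σ : ℝ := 1 / (1 + θ) with hσ
  have hσ0 : 0 < σ := by positivity
  have hσ1 : σ < 1 := by
    rw [hσ, div_lt_one (by linarith)]; linarith
  set m : ℝ := max ρ σ with hm
  set τ : ℝ := (1 + m) / 2 with hτ
  have hm0 : 0 < m := lt_of_lt_of_le hρ0 (le_max_left _ _)
  have hm1 : m < 1 := max_lt hρ1 hσ1
  have hτ0 : 0 < τ := by rw [hτ]; linarith
  have hτ1 : τ < 1 := by rw [hτ]; linarith
  have hmτ : m < τ := by rw [hτ]; linarith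
  have hρτ : ρ < τ := lt_of_le_of_lt (le_max_left _ _) hmτ
  have hστ : σ ≤ τ := le_of_lt (lt_of_le_of_lt (le_max_right _ _) hmτ)
  have hs : ∀ k : ℕ, σ ^ k = 1 / (1 + θ) ^ k := by
    intro k; rw [hσ, one_div, inv_pow, one_div]
  have key : ∀ k, E (k + 1) ≤ ρ * E k + c * σ ^ k := by
    intro k
    have h1 := hrec1 k
    have h2 := hrec2 k
    have hsk := hs k
    have hP : 0 < (1 + θ) ^ k := by positivity
    have hd1 : c / (1 + θ) ^ k = c * σ ^ k := by rw [hsk]; ring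
    rw [hd1] at h1
    rw [← hsk] at h2
    have h3 : E (k + 1) - c * σ ^ k ≤ c * E k / (c + cbar) := by
      rw [le_div_iff₀ hccbar]
      nlinarith [h1, h2, mul_le_mul_of_nonneg_left h1 hc.le,
        mul_le_mul_of_nonneg_left h2 hcbar.le]
    have h4 : ρ * E k = c * E k / (c + cbar) := by rw [hρ]; ring
    linarith [h3, h4.ge, h4.le]
  set C : ℝ := max (E 0) (c / (τ - ρ)) with hC
  have hτρ : 0 < τ - ρ := by linarith
  have hC0 : 0 < C := lt_of_lt_of_le (div_pos hc hτρ) (le_max_right _ _)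
  have hCc : c / (τ - ρ) ≤ C := le_max_right _ _
  have hCstep : ρ * C + c ≤ τ * C := by
    rw [div_le_iff₀ hτρ] at hCc
    nlinarith
  refine ⟨C, τ, hC0, hτ0, hτ1, ?_⟩
  intro k
  induction k with
  | zero => simp only [pow_zero, mul_one]; exact le_max_left _ _
  | succ k ih =>
    have hσk : σ ^ k ≤ τ ^ k := pow_le_pow_left₀ hσ0.le hστ k
    have hτk : 0 ≤ τ ^ k := by positivity
    calc E (k + 1) ≤ ρ * E k + c * σ ^ k := key k
      _ ≤ ρ * (C * τ ^ k) + c * τ ^ k := by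
          have := mul_le_mul_of_nonneg_left ih hρ0.le
          nlinarith
      _ = (ρ * C + c) * τ ^ k := by ring
      _ ≤ (τ * C) * τ ^ k := by nlinarith
      _ = C * τ ^ (k + 1) := by ring
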